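/- Let q_n denote the number of independent dominating sets of the para-chain square cactus Q_n. For every n ≥ 1, the number of independent dominating sets of Q_{n+1} that contain the end cut vertex x_{n+1} equals q_n. -/

import Mathlib

/-- `S` is an independent dominating set of `G`: pairwise non-adjacent, and every
vertex outside `S` has a neighbour in `S`. -/
def IsIndepDomSet {V : Type*} (G : SimpleGraph V) (S : Finset V) : Prop :=
  (∀ v ∈ S, ∀ w ∈ S, ¬ G.Adj v w) ∧ ∀ v, v ∉ S → ∃ w ∈ S, G.Adj v w

/-- The para-chain square cactus `Q n`: `Sum.inl i` is the cut vertex `x i`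
(`0 ≤ i ≤ n`), `Sum.inr (Sum.inl k)` is `u (k+1)` and `Sum.inr (Sum.inr k)` is
`w (k+1)` (`0 ≤ k ≤ n-1`); the `i`-th square (`1 ≤ i ≤ n`) is the four-cycle
`x (i-1) – u i – x i – w i – x (i-1)`. -/
def paraSq (n : ℕ) : SimpleGraph (Fin (n + 1) ⊕ (Fin n ⊕ Fin n)) :=
  SimpleGraph.fromRel fun p q =>
    match p, q with
    | Sum.inl i, Sum.inr (Sum.inl k) => (i : ℕ) = (k : ℕ) ∨ (i : ℕ) = (k : ℕ) + 1
    | Sum.inl i, Sum.inr (Sum.inr k) => (i : ℕ) = (k : ℕ) ∨ (i : ℕ) = (k : ℕ) + 1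
    | _, _ => False

/-- The number of independent dominating sets of the para-chain square cactus `Q n`. -/
noncomputable def numIDSParaSq (n : ℕ) : ℕ :=
  Nat.card {S : Finset (Fin (n + 1) ⊕ (Fin n ⊕ Fin n)) // IsIndepDomSet (paraSq n) S}

/-!
An independent dominating set through a vertex `v` is `v` together with an independent dominating
set of the graph left after deleting the closed neighbourhood of `v`, and conversely. For the end
cut vertex `x (n+1)` of `Q (n+1)` that closed neighbourhood is `{x (n+1), u (n+1), w (n+1)}`, and
what remains is a copy of `Q n`.
-/

namespace IsIndepDomSet

variable {V W : Type*} {G : SimpleGraph V} {H : SimpleGraph W} {v : V} (f : H ↪g G)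
  {S : Finset V} {T : Finset W}

theorem mem_range_of_mem (hf : ∀ u, u ∈ Set.range f ↔ u ≠ v ∧ ¬ G.Adj v u)
    (hS : IsIndepDomSet G S) (hv : v ∈ S) {u : V} (hu : u ∈ S) (huv : u ≠ v) :
    u ∈ Set.range f :=
  (hf u).2 ⟨huv, hS.1 v hv u hu⟩

theorem preimage (hf : ∀ u, u ∈ Set.range f ↔ u ≠ v ∧ ¬ G.Adj v u)
    (hS : IsIndepDomSet G S) (hv : v ∈ S) :
    IsIndepDomSet H (S.preimage f f.injective.injOn) := by
  refine ⟨fun a ha b hb hab => hS.1 _ (Finset.mem_preimage.mp ha) _ (Finset.mem_preimage.mp hb)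
    (f.map_rel_iff.mpr hab), fun a ha => ?_⟩
  obtain ⟨u, huS, hau⟩ := hS.2 (f a) (mt Finset.mem_preimage.mpr ha)
  have huv : u ≠ v := by
    rintro rfl
    exact ((hf (f a)).1 ⟨a, rfl⟩).2 hau.symm
  obtain ⟨b, rfl⟩ := mem_range_of_mem f hf hS hv huS huv
  exact ⟨b, Finset.mem_preimage.mpr huS, f.map_rel_iff.mp hau⟩

theorem insert_map [DecidableEq V] (hf : ∀ u, u ∈ Set.range f ↔ u ≠ v ∧ ¬ G.Adj v u)
    (hT : IsIndepDomSet H T) :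
    IsIndepDomSet G (insert v (T.map f.toEmbedding)) := by
  have hfv (a : W) : f a ≠ v ∧ ¬ G.Adj v (f a) := (hf (f a)).1 ⟨a, rfl⟩
  refine ⟨?_, fun u hu => ?_⟩
  · simp only [Finset.mem_insert, Finset.mem_map, RelEmbedding.coe_toEmbedding]
    rintro _ (rfl | ⟨a, ha, rfl⟩) _ (rfl | ⟨b, hb, rfl⟩)
    · exact G.irrefl
    · exact (hfv b).2
    · exact fun h => (hfv a).2 h.symm
    · exact fun h => hT.1 a ha b hb (f.map_rel_iff.mp h)
  · simp only [Finset.mem_insert, Finset.mem_map, RelEmbedding.coe_toEmbedding, not_or] at hu ⊢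
    by_cases hvu : G.Adj v u
    · exact ⟨v, Or.inl rfl, hvu.symm⟩
    obtain ⟨a, rfl⟩ := (hf u).2 ⟨hu.1, hvu⟩
    obtain ⟨b, hb, hab⟩ := hT.2 a fun ha => hu.2 ⟨a, ha, rfl⟩
    exact ⟨f b, Or.inr ⟨b, hb, rfl⟩, f.map_rel_iff.mpr hab⟩

noncomputable def containingEquiv [DecidableEq V]
    (hf : ∀ u, u ∈ Set.range f ↔ u ≠ v ∧ ¬ G.Adj v u) :
    {S : Finset V // IsIndepDomSet G S ∧ v ∈ S} ≃ {T : Finset W // IsIndepDomSet H T} where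
  toFun S := ⟨S.1.preimage f f.injective.injOn, S.2.1.preimage f hf S.2.2⟩
  invFun T :=
    ⟨insert v (T.1.map f.toEmbedding), T.2.insert_map f hf, Finset.mem_insert_self _ _⟩
  left_inv := by
    rintro ⟨S, hS, hv⟩
    ext u
    simp only [Finset.mem_insert, Finset.mem_map, Finset.mem_preimage,
      RelEmbedding.coe_toEmbedding]
    refine ⟨?_, fun hu => ?_⟩
    · rintro (rfl | ⟨a, ha, rfl⟩) <;> assumption
    · by_cases huv : u = v
      · exact Or.inl huv
      · obtain ⟨a, rfl⟩ := mem_range_of_mem f hf hS hv hu huv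
        exact Or.inr ⟨a, hu, rfl⟩
  right_inv := by
    rintro ⟨T, hT⟩
    ext a
    simp only [Finset.mem_preimage, Finset.mem_insert, Finset.mem_map,
      RelEmbedding.coe_toEmbedding, EmbeddingLike.apply_eq_iff_eq, exists_eq_right,
      or_iff_right_iff_imp]
    exact fun h => absurd h ((hf (f a)).1 ⟨a, rfl⟩).1

end IsIndepDomSet

def paraSqEmbedding (n : ℕ) : paraSq n ↪g paraSq (n + 1) where
  toEmbedding := Fin.castSuccEmb.sumMap (Fin.castSuccEmb.sumMap Fin.castSuccEmb)
  map_rel_iff' {p q} := by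
    rcases p with i | k | k <;> rcases q with j | l | l <;>
      simp [paraSq, SimpleGraph.fromRel_adj, Fin.ext_iff]

theorem mem_range_paraSqEmbedding_iff (n : ℕ)
    (u : Fin (n + 2) ⊕ (Fin (n + 1) ⊕ Fin (n + 1))) :
    u ∈ Set.range (paraSqEmbedding n) ↔ u ≠ Sum.inl (Fin.last (n + 1)) ∧
      ¬ (paraSq (n + 1)).Adj (Sum.inl (Fin.last (n + 1))) u := by
  change u ∈ Set.range (Sum.map Fin.castSucc (Sum.map Fin.castSucc Fin.castSucc)) ↔ _
  rcases u with j | l | l <;> [cases j using Fin.lastCases; cases l using Fin.lastCases;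
    cases l using Fin.lastCases] <;>
    simp [paraSq, SimpleGraph.fromRel_adj, Fin.ext_iff] <;> intros <;> omega

theorem numIDSParaSq_containing_end_general (n : ℕ) :
    Nat.card {S : Finset (Fin (n + 2) ⊕ (Fin (n + 1) ⊕ Fin (n + 1))) //
        IsIndepDomSet (paraSq (n + 1)) S ∧ Sum.inl (Fin.last (n + 1)) ∈ S} =
      numIDSParaSq n :=
  Nat.card_congr <|
    IsIndepDomSet.containingEquiv (paraSqEmbedding n) (mem_range_paraSqEmbedding_iff n)

/-- For every `n ≥ 1`, the number of independent dominating sets of `Q (n+1)` that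
contain the end cut vertex `x (n+1)` equals `q n`. -/
theorem numIDSParaSq_containing_end (n : ℕ) (hn : 1 ≤ n) :
    Nat.card {S : Finset (Fin (n + 2) ⊕ (Fin (n + 1) ⊕ Fin (n + 1))) //
        IsIndepDomSet (paraSq (n + 1)) S ∧ Sum.inl (Fin.last (n + 1)) ∈ S} =
      numIDSParaSq n :=
  numIDSParaSq_containing_end_general n
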